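/- (Left and right properness) Weak equivalences are stable under pushout along cofibrations and under pullback along admissible epimorphisms: (i) if i : A → B is a cofibration and a : A → A′ is a weak equivalence with A′ ∈ 𝒞, then the induced map B → A′ +_A B into the pushout is a weak equivalence; (ii) dually, if p : B → A is an admissible epimorphism between objects of 𝒞 and a : A′ → A is a weak equivalence with A′ ∈ 𝒞, then the induced map A′ ×_A B → B from the pullback is a weak equivalence. -/

import Mathlib

open CategoryTheory CategoryTheory.Limits

universe v u

variable {𝒜 : Type u} [Category.{v} 𝒜] [Abelian 𝒜]

/-- `(f, g)` forms a short exact sequence `0 ⟶ X ⟶ Y ⟶ Z ⟶ 0` in the ambient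
abelian category `𝒜`. -/
def IsShortExactSeq {X Y Z : 𝒜} (f : X ⟶ Y) (g : Y ⟶ Z) : Prop :=
  ∃ w : f ≫ g = 0, (ShortComplex.mk f g w).ShortExact

/-- A class of objects is closed under isomorphisms. -/
def IsoClosed (P : 𝒜 → Prop) : Prop := ∀ ⦃X Y : 𝒜⦄, (X ≅ Y) → P X → P Y

/-- `Ext¹(X, Y) = 0` relative to the exact subcategory determined by `E`:
every short exact sequence `0 ⟶ Y ⟶ M ⟶ X ⟶ 0` in `E` splits. -/
def Ext1IsZero (E : 𝒜 → Prop) (X Y : 𝒜) : Prop :=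
  ∀ ⦃M : 𝒜⦄ (f : Y ⟶ M) (g : M ⟶ X), E M → IsShortExactSeq f g →
    ∃ r : M ⟶ Y, f ≫ r = 𝟙 Y

/-- `(C, I)` is a cotorsion pair in the exact subcategory of `𝒜` determined by
the class of objects `E`: the two classes are each other's orthogonal
complement with respect to `Ext¹`. -/
structure IsCotorsionPair (E C I : 𝒜 → Prop) : Prop where
  right_eq : ∀ Y, I Y ↔ (E Y ∧ ∀ ⦃X⦄, C X → Ext1IsZero E X Y)
  left_eq : ∀ X, C X ↔ (E X ∧ ∀ ⦃Y⦄, I Y → Ext1IsZero E X Y)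

/-- The cotorsion pair `(C, I)` in `E` is complete: every object of `E` admits
both kinds of approximation sequences. -/
def IsCompleteCP (E C I : 𝒜 → Prop) : Prop :=
  (∀ A, E A → ∃ (Y P : 𝒜) (f : A ⟶ Y) (g : Y ⟶ P),
      I Y ∧ C P ∧ IsShortExactSeq f g) ∧
  (∀ A, E A → ∃ (Y P : 𝒜) (f : Y ⟶ P) (g : P ⟶ A),
      I Y ∧ C P ∧ IsShortExactSeq f g)

/-- The cotorsion pair is hereditary: `C` is closed under kernels of
admissible epimorphisms in `E`. -/
def IsHereditaryCP (E C : 𝒜 → Prop) : Prop :=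
  ∀ ⦃X Y Z : 𝒜⦄ (f : X ⟶ Y) (g : Y ⟶ Z),
    IsShortExactSeq f g → E X → C Y → C Z → C X

/-- A cofibration: an admissible monomorphism between objects of `C` whose
cokernel lies in `C`. -/
def IsCofib (C : 𝒜 → Prop) {X Y : 𝒜} (f : X ⟶ Y) : Prop :=
  C X ∧ C Y ∧ ∃ (W : 𝒜) (g : Y ⟶ W), C W ∧ IsShortExactSeq f g

/-- An acyclic fibration: an admissible epimorphism in `E` whose kernel lies
in `I`. -/
def IsAcyclicFib (E I : 𝒜 → Prop) {Y Z : 𝒜} (g : Y ⟶ Z) : Prop :=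
  E Y ∧ E Z ∧ ∃ (K : 𝒜) (k : K ⟶ Y), I K ∧ IsShortExactSeq k g

/-- An acyclic cofibration: an admissible monomorphism between objects of `C`
whose cokernel lies in `C ∩ Z`. -/
def IsAcyclicCofib (C Zc : 𝒜 → Prop) {X Y : 𝒜} (f : X ⟶ Y) : Prop :=
  C X ∧ C Y ∧ ∃ (W : 𝒜) (g : Y ⟶ W), C W ∧ Zc W ∧ IsShortExactSeq f g

/-- A weak equivalence: a morphism between objects of `C` that factors as an
acyclic cofibration followed by an acyclic fibration. -/
def IsWeakEquiv (E C I Zc : 𝒜 → Prop) {X Y : 𝒜} (f : X ⟶ Y) : Prop :=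
  C X ∧ C Y ∧ ∃ (M : 𝒜) (i : X ⟶ M) (p : M ⟶ Y),
    IsAcyclicCofib C Zc i ∧ IsAcyclicFib E I p ∧ i ≫ p = f

/-- The standing setup: a complete hereditary cotorsion pair `(Cc, Ip)` in the
exact subcategory of `𝒜` determined by the isomorphism-closed,
extension-closed class `E`, together with an isomorphism-closed class
`Zc ⊆ E` with `Ip ⊆ Zc`, such that `Zc ∩ Cc` is closed under extensions and
under cokernels of admissible monomorphisms in `Cc`. -/
structure CotorsionSetup (E Cc Ip Zc : 𝒜 → Prop) : Prop where
  isoE : IsoClosed E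
  isoC : IsoClosed Cc
  isoI : IsoClosed Ip
  isoZ : IsoClosed Zc
  extClosedE : ∀ ⦃X Y Z : 𝒜⦄ (f : X ⟶ Y) (g : Y ⟶ Z),
    IsShortExactSeq f g → E X → E Z → E Y
  cp : IsCotorsionPair E Cc Ip
  complete : IsCompleteCP E Cc Ip
  hereditary : IsHereditaryCP E Cc
  zSubE : ∀ ⦃X⦄, Zc X → E X
  iSubZ : ∀ ⦃X⦄, Ip X → Zc X
  zcExtClosed : ∀ ⦃X Y Z : 𝒜⦄ (f : X ⟶ Y) (g : Y ⟶ Z), IsShortExactSeq f g →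
    Cc X → Cc Y → Cc Z → Zc X → Zc Z → Zc Y
  zcCokerClosed : ∀ ⦃X Y Z : 𝒜⦄ (f : X ⟶ Y) (g : Y ⟶ Z), IsShortExactSeq f g →
    Cc X → Cc Y → Cc Z → Zc X → Zc Y → Zc Z

/-! A weak equivalence `a` factors as an acyclic cofibration `j` (cokernel `Z₀ ∈ 𝒞 ∩ 𝒵`) followed
by an acyclic fibration `q` (kernel `K ∈ 𝒞⊥`). Pushing the factorization out along a cofibration,
the pushout of `j` is again an admissible monomorphism with cokernel `Z₀`, and by pasting of
pushout squares the comparison map into `A' +_A B` is a pushout of `q`, hence an admissible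
epimorphism with kernel `K`. The new objects lie in `𝒞` because the left class of a cotorsion pair
is closed under extensions. Right properness is the dual argument with pullbacks. -/

open Category

def IsExtensionClosed (E : 𝒜 → Prop) : Prop :=
  ∀ ⦃X Y Z : 𝒜⦄ (f : X ⟶ Y) (g : Y ⟶ Z), IsShortExactSeq f g → E X → E Z → E Y

namespace IsShortExactSeq

variable {X Y Z : 𝒜} {f : X ⟶ Y} {g : Y ⟶ Z}

lemma w (h : IsShortExactSeq f g) : f ≫ g = 0 := h.choose

lemma shortExact (h : IsShortExactSeq f g) : (ShortComplex.mk f g h.w).ShortExact :=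
  h.choose_spec

lemma mono (h : IsShortExactSeq f g) : Mono f := h.shortExact.mono_f

lemma epi (h : IsShortExactSeq f g) : Epi g := h.shortExact.epi_g

lemma exists_desc (h : IsShortExactSeq f g) {V : 𝒜} (u : Y ⟶ V) (hu : f ≫ u = 0) :
    ∃ d : Z ⟶ V, g ≫ d = u :=
  have := h.epi
  h.shortExact.exact.desc' u hu

lemma exists_lift (h : IsShortExactSeq f g) {V : 𝒜} (u : V ⟶ Y) (hu : u ≫ g = 0) :
    ∃ l : V ⟶ X, l ≫ f = u :=
  have := h.mono
  h.shortExact.exact.lift' u hu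

lemma of_exists_desc [Mono f] [Epi g] (w : f ≫ g = 0)
    (hd : ∀ ⦃V : 𝒜⦄ (u : Y ⟶ V), f ≫ u = 0 → ∃ d : Z ⟶ V, g ≫ d = u) :
    IsShortExactSeq f g :=
  ⟨w, { exact := ShortComplex.exact_of_g_is_cokernel _ (CokernelCofork.IsColimit.ofπ' g w
    fun u hu => ⟨(hd u hu).choose, (hd u hu).choose_spec⟩) }⟩

lemma of_exists_lift [Mono f] [Epi g] (w : f ≫ g = 0)
    (hl : ∀ ⦃V : 𝒜⦄ (u : V ⟶ Y), u ≫ g = 0 → ∃ l : V ⟶ X, l ≫ f = u) :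
    IsShortExactSeq f g :=
  ⟨w, { exact := ShortComplex.exact_of_f_is_kernel _ (KernelFork.IsLimit.ofι' f w
    fun u hu => ⟨(hl u hu).choose, (hl u hu).choose_spec⟩) }⟩

lemma cokernel_π (f : X ⟶ Y) [Mono f] : IsShortExactSeq f (cokernel.π f) :=
  of_exists_desc (cokernel.condition f) fun _ u hu =>
    ⟨cokernel.desc f u hu, cokernel.π_desc _ _ _⟩

lemma exists_section (h : IsShortExactSeq f g) (r : Y ⟶ X) (hr : f ≫ r = 𝟙 X) :
    ∃ s : Z ⟶ Y, s ≫ g = 𝟙 Z :=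
  ⟨_, (ShortComplex.Splitting.ofExactOfRetraction _ h.shortExact.exact r hr h.epi).s_g⟩

lemma of_isPushout (h : IsShortExactSeq f g) {T P : 𝒜} {t : X ⟶ T} {t' : Y ⟶ P} {f' : T ⟶ P}
    (sq : IsPushout f t t' f') : IsShortExactSeq f' (sq.desc g 0 (by rw [h.w, comp_zero])) := by
  have := h.mono
  have : Epi (t' ≫ sq.desc g 0 (by rw [h.w, comp_zero])) := by rw [sq.inl_desc]; exact h.epi
  have : Epi (sq.desc g 0 (by rw [h.w, comp_zero])) := epi_of_epi t' _
  have : Mono f' := (MorphismProperty.monomorphisms 𝒜).of_isPushout sq.flip ‹Mono f›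
  refine of_exists_desc (sq.inr_desc _ _ _) fun V u hu => ?_
  obtain ⟨d, hd⟩ := h.exists_desc (t' ≫ u) (by rw [← assoc, sq.w, assoc, hu, comp_zero])
  exact ⟨d, sq.hom_ext (by rw [sq.inl_desc_assoc, hd]) (by rw [sq.inr_desc_assoc, zero_comp, hu])⟩

lemma of_isPullback (h : IsShortExactSeq f g) {T P : 𝒜} {t : T ⟶ Z} {t' : P ⟶ Y} {g' : P ⟶ T}
    (sq : IsPullback t' g' g t) : IsShortExactSeq (sq.lift f 0 (by rw [h.w, zero_comp])) g' := by
  have := h.epi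
  have : Mono (sq.lift f 0 (by rw [h.w, zero_comp]) ≫ t') := by rw [sq.lift_fst]; exact h.mono
  have : Mono (sq.lift f 0 (by rw [h.w, zero_comp])) := mono_of_mono _ t'
  have : Epi g' := (MorphismProperty.epimorphisms 𝒜).of_isPullback sq ‹Epi g›
  refine of_exists_lift (sq.lift_snd _ _ _) fun V u hu => ?_
  obtain ⟨l, hl⟩ := h.exists_lift (u ≫ t') (by rw [assoc, sq.w, ← assoc, hu, zero_comp])
  exact ⟨l, sq.hom_ext (by rw [assoc, sq.lift_fst, hl])
    (by rw [assoc, sq.lift_snd, comp_zero, hu])⟩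

lemma comp_left_of_isPushout {K M A Q R : 𝒜} {k : K ⟶ M} {q : M ⟶ A} (h : IsShortExactSeq k q)
    {f : M ⟶ Q} {α : A ⟶ R} {φ : Q ⟶ R} (sq : IsPushout q f α φ) [Mono (k ≫ f)] :
    IsShortExactSeq (k ≫ f) φ := by
  have := h.epi
  have : Epi φ := (MorphismProperty.epimorphisms 𝒜).of_isPushout sq.flip ‹Epi q›
  refine of_exists_desc (by rw [assoc, ← sq.w, ← assoc, h.w, zero_comp]) fun V u hu => ?_
  obtain ⟨v, hv⟩ := h.exists_desc (f ≫ u) (by rw [← assoc, hu])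
  exact ⟨sq.desc v u hv, sq.inr_desc _ _ _⟩

lemma comp_right_of_isPullback {A M Z P Q : 𝒜} {j : A ⟶ M} {z : M ⟶ Z}
    (h : IsShortExactSeq j z) {f : Q ⟶ M} {β : P ⟶ A} {ψ : P ⟶ Q} (sq : IsPullback β ψ j f)
    [Epi (f ≫ z)] :
    IsShortExactSeq ψ (f ≫ z) := by
  have := h.mono
  have : Mono ψ := (MorphismProperty.monomorphisms 𝒜).of_isPullback sq ‹Mono j›
  refine of_exists_lift (by rw [← assoc, ← sq.w, assoc, h.w, comp_zero]) fun V u hu => ?_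
  obtain ⟨y, hy⟩ := h.exists_lift (u ≫ f) (by rw [assoc, hu])
  exact ⟨sq.lift y u hy, sq.lift_snd _ _ _⟩

end IsShortExactSeq

namespace Ext1IsZero

variable {E : 𝒜 → Prop}

lemma exists_lift (hE : IsExtensionClosed E) {X I N Y : 𝒜} (hXI : Ext1IsZero E X I)
    (hX : E X) (hI : E I) {u : I ⟶ N} {v : N ⟶ Y} (huv : IsShortExactSeq u v) (f : X ⟶ Y) :
    ∃ t : X ⟶ N, t ≫ v = f := by
  have hP := huv.of_isPullback (IsPullback.of_hasPullback v f)
  obtain ⟨r, hr⟩ := hXI _ _ (hE _ _ hP hI hX) hP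
  obtain ⟨s, hs⟩ := hP.exists_section r hr
  exact ⟨s ≫ pullback.fst v f, by rw [assoc, pullback.condition, ← assoc, hs, id_comp]⟩

/-- An extension `N` of `Y` by `I` splits over `X` since `Ext¹(X, I) = 0`; then `N / X` is an
extension of `Z` by `I`, which splits since `Ext¹(Z, I) = 0`. -/
lemma of_isShortExactSeq (hE : IsExtensionClosed E) {X Y Z I : 𝒜} {f : X ⟶ Y} {g : Y ⟶ Z}
    (h : IsShortExactSeq f g) (hXI : Ext1IsZero E X I) (hZI : Ext1IsZero E Z I)
    (hX : E X) (hZ : E Z) (hI : E I) :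
    Ext1IsZero E Y I := by
  intro N u v _ huv
  obtain ⟨t, ht⟩ := hXI.exists_lift hE hX hI huv f
  have := h.mono
  have := h.epi
  have : Mono t := by
    have : Mono (t ≫ v) := by rwa [ht]
    exact mono_of_mono t v
  set v₁ := cokernel.desc t (v ≫ g) (by rw [← assoc, ht, h.w])
  have sq : IsPushout v (cokernel.π t) g v₁ := by
    refine IsPushout.mk' (cokernel.π_desc _ _ _).symm (fun _ _ _ e _ => (cancel_epi g).1 e)
      fun T a b hab => ?_
    obtain ⟨m, hm⟩ :=
      h.exists_desc a (by rw [← ht, assoc, hab, cokernel.condition_assoc, zero_comp])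
    refine ⟨m, hm, (cancel_epi (cokernel.π t)).1 ?_⟩
    rw [cokernel.π_desc_assoc, assoc, hm, hab]
  have : Mono (u ≫ cokernel.π t) := by
    refine Preadditive.mono_of_cancel_zero _ fun {V} c hc => ?_
    obtain ⟨e, he⟩ := (IsShortExactSeq.cokernel_π t).exists_lift (c ≫ u) (by rw [assoc, hc])
    have he0 : e = 0 := by
      rw [← cancel_mono f, zero_comp, ← ht, ← assoc, he, assoc, huv.w, comp_zero]
    have := huv.mono
    rw [← cancel_mono u, zero_comp, ← he, he0, zero_comp]
  have hN₁ := huv.comp_left_of_isPushout sq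
  obtain ⟨r, hr⟩ := hZI _ _ (hE _ _ hN₁ hI hZ) hN₁
  exact ⟨cokernel.π t ≫ r, by rw [← assoc, hr]⟩

end Ext1IsZero

namespace IsCotorsionPair

variable {E C I : 𝒜 → Prop}

lemma left_le (cp : IsCotorsionPair E C I) : C ≤ E := fun X hX => ((cp.left_eq X).1 hX).1

lemma right_le (cp : IsCotorsionPair E C I) : I ≤ E := fun Y hY => ((cp.right_eq Y).1 hY).1

lemma isExtensionClosed_left (cp : IsCotorsionPair E C I) (hE : IsExtensionClosed E) :
    IsExtensionClosed C := by
  intro X Y Z f g h hX hZ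
  refine (cp.left_eq Y).2 ⟨hE f g h (cp.left_le X hX) (cp.left_le Z hZ), fun J hJ => ?_⟩
  exact Ext1IsZero.of_isShortExactSeq hE h (((cp.left_eq X).1 hX).2 hJ)
    (((cp.left_eq Z).1 hZ).2 hJ) (cp.left_le X hX) (cp.left_le Z hZ) (cp.right_le J hJ)

end IsCotorsionPair

section Properness

variable {E Cc Ip Zc : 𝒜 → Prop}

lemma isWeakEquiv_pushout_inr (cp : IsCotorsionPair E Cc Ip) (hE : IsExtensionClosed E)
    {A B A' : 𝒜} {i : A ⟶ B} {a : A ⟶ A'} (hi : IsCofib Cc i)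
    (ha : IsWeakEquiv E Cc Ip Zc a) (hA' : Cc A') :
    IsWeakEquiv E Cc Ip Zc (pushout.inr a i) := by
  obtain ⟨-, hB, W, _, hW, hiw⟩ := hi
  obtain ⟨-, -, M, j, q, ⟨-, -, Z₀, z, hZ₀, hZZ₀, hjz⟩, ⟨-, -, K, k, hK, hkq⟩, rfl⟩ := ha
  have hC := cp.isExtensionClosed_left hE
  have := hiw.mono
  have := hkq.mono
  have sqQ := IsPushout.of_hasPushout j i
  have sqR := IsPushout.of_hasPushout (j ≫ q) i
  have hQ := hjz.of_isPushout sqQ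
  have hR := hiw.of_isPushout sqR.flip
  have hCQ := hC _ _ hQ hB hZ₀
  have hCR := hC _ _ hR hA' hW
  exact ⟨hB, hCR, _, _, _, ⟨hB, hCQ, Z₀, _, hZ₀, hZZ₀, hQ⟩,
    ⟨cp.left_le _ hCQ, cp.left_le _ hCR, K, _, hK, hkq.comp_left_of_isPushout (sqR.of_left' sqQ)⟩,
    sqQ.inr_desc _ _ _⟩

lemma isWeakEquiv_pullback_snd (cp : IsCotorsionPair E Cc Ip) (hE : IsExtensionClosed E)
    {A B A' : 𝒜} {p : B ⟶ A} {a : A' ⟶ A} (hB : Cc B)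
    (hp : ∃ (K : 𝒜) (k : K ⟶ B), Cc K ∧ IsShortExactSeq k p)
    (ha : IsWeakEquiv E Cc Ip Zc a) (hA' : Cc A') :
    IsWeakEquiv E Cc Ip Zc (pullback.snd a p) := by
  obtain ⟨K, k, hK, hkp⟩ := hp
  obtain ⟨-, -, M, j, q, ⟨-, -, Z₀, z, hZ₀, hZZ₀, hjz⟩, ⟨-, -, K', k', hK', hk'q⟩, rfl⟩ := ha
  have hC := cp.isExtensionClosed_left hE
  have := hkp.epi
  have := hjz.epi
  have sqP := IsPullback.of_hasPullback (j ≫ q) p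
  have sqP₁ := IsPullback.of_hasPullback q p
  have hP := hkp.of_isPullback sqP.flip
  have hCP := hC _ _ hP hK hA'
  have hψ := hjz.comp_right_of_isPullback (sqP.of_bot' sqP₁)
  have hCP₁ := hC _ _ hψ hCP hZ₀
  exact ⟨hCP, hB, _, _, _, ⟨hCP, hCP₁, Z₀, _, hZ₀, hZZ₀, hψ⟩,
    ⟨cp.left_le _ hCP₁, cp.left_le _ hB, K', _, hK', hk'q.of_isPullback sqP₁⟩,
    sqP₁.lift_snd _ _ _⟩

end Properness

/-- **Left and right properness.** In the standing setup, weak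
equivalences are stable under pushout along cofibrations and under pullback
along admissible epimorphisms:
(i) if `i : A ⟶ B` is a cofibration and `a : A ⟶ A'` is a weak equivalence
with `A' ∈ Cc`, then the induced map `B ⟶ A' +_A B` into the pushout is a
weak equivalence;
(ii) dually, if `p : B ⟶ A` is an admissible epimorphism between objects of
`Cc` and `a : A' ⟶ A` is a weak equivalence with `A' ∈ Cc`, then the induced
map `A' ×_A B ⟶ B` from the pullback is a weak equivalence. -/
theorem properness
    (E Cc Ip Zc : 𝒜 → Prop) (S : CotorsionSetup E Cc Ip Zc) :
    (∀ {A B A' : 𝒜} (i : A ⟶ B) (a : A ⟶ A'),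
      IsCofib Cc i → IsWeakEquiv E Cc Ip Zc a → Cc A' →
        IsWeakEquiv E Cc Ip Zc (pushout.inr a i)) ∧
    (∀ {A B A' : 𝒜} (p : B ⟶ A) (a : A' ⟶ A),
      Cc B → Cc A →
      (∃ (K : 𝒜) (k : K ⟶ B), Cc K ∧ IsShortExactSeq k p) →
      IsWeakEquiv E Cc Ip Zc a → Cc A' →
        IsWeakEquiv E Cc Ip Zc (pullback.snd a p)) :=
  ⟨fun _ _ hi ha hA' => isWeakEquiv_pushout_inr S.cp S.extClosedE hi ha hA',
    fun _ _ hB _ hp ha hA' => isWeakEquiv_pullback_snd S.cp S.extClosedE hB hp ha hA'⟩
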